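/- Let n ≥ 1 and let F be a set of finite tournaments such that no transitive tournament on at most n vertices belongs to F (up to isomorphism) and every tournament on more than n vertices contains a subtournament isomorphic to a member of F. Then a finite undirected graph G has an F-free orientation if and only if G contains no clique on n+1 vertices. -/

import Mathlib

/-!
An orientation of an `(n+1)`-clique restricts to a tournament on `n+1` vertices, which contains a
member of `F`; so an `F`-free orientation forces `G` to be `K_{n+1}`-free. Conversely, orient every
edge upwards along a linear order of the vertices. Each subtournament of this orientation is
transitive and spans a clique, so it has at most `n` vertices and cannot be a member of `F`.
-/

def IsOrientation {V : Type*} (G : SimpleGraph V) (D : V → V → Prop) : Prop :=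
  (∀ u v, G.Adj u v ↔ (D u v ∨ D v u)) ∧ ∀ u v, ¬(D u v ∧ D v u)

def IsTournament {V : Type*} (T : V → V → Prop) : Prop :=
  (∀ a, ¬ T a a) ∧ ∀ a b, a ≠ b → (T a b ↔ ¬ T b a)

/-- `D` is `F`-free: no induced subtournament of `D` is isomorphic to a member of `F`. -/
def FFree {V : Type*} (F : Set (Σ n : ℕ, Fin n → Fin n → Prop)) (D : V → V → Prop) : Prop :=
  ¬ ∃ p ∈ F, ∃ f : Fin p.1 → V, Function.Injective f ∧ ∀ i j, p.2 i j ↔ D (f i) (f j)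

section Tournament

variable {ι : Type*} {T : ι → ι → Prop}

theorem IsTournament.or_of_ne (hT : IsTournament T) {a b : ι} (hab : a ≠ b) : T a b ∨ T b a :=
  or_iff_not_imp_right.2 (hT.2 a b hab).2

theorem IsTournament.transitive_of_lt {α : Type*} [Preorder α] (hT : IsTournament T) (f : ι → α)
    (hf : ∀ i j, T i j → f i < f j) : Transitive T := by
  intro a b c hab hbc
  have hac : f a < f c := (hf a b hab).trans (hf b c hbc)
  exact (hT.or_of_ne (fun h ↦ hac.ne (congrArg f h))).resolve_right
    fun hca ↦ hac.not_gt (hf c a hca)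

end Tournament

namespace IsOrientation

variable {V ι : Type*} {G : SimpleGraph V} {D : V → V → Prop}

theorem irrefl (hD : IsOrientation G D) (v : V) : ¬ D v v :=
  fun h ↦ G.loopless.irrefl v ((hD.1 v v).2 (Or.inl h))

theorem isTournament_comp (hD : IsOrientation G D) {f : ι → V}
    (hf : ∀ i j, i ≠ j → G.Adj (f i) (f j)) : IsTournament fun i j ↦ D (f i) (f j) := by
  refine ⟨fun i ↦ hD.irrefl (f i), fun i j hij ↦ ⟨fun h h' ↦ hD.2 _ _ ⟨h, h'⟩, fun h ↦ ?_⟩⟩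
  exact ((hD.1 _ _).1 (hf i j hij)).resolve_right h

theorem adj_of_isTournament (hD : IsOrientation G D) {T : ι → ι → Prop} (hT : IsTournament T)
    {f : ι → V} (hfT : ∀ i j, T i j ↔ D (f i) (f j)) {i j : ι} (hij : i ≠ j) :
    G.Adj (f i) (f j) :=
  (hD.1 _ _).2 ((hT.or_of_ne hij).imp (hfT i j).1 (hfT j i).1)

theorem cliqueFree_of_fFree (hD : IsOrientation G D) {F : Set (Σ m : ℕ, Fin m → Fin m → Prop)}
    (hDF : FFree F D) {m : ℕ}
    (hF : ∀ T : Fin m → Fin m → Prop, IsTournament T →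
      ∃ p ∈ F, ∃ f : Fin p.1 → Fin m, Function.Injective f ∧ ∀ i j, p.2 i j ↔ T (f i) (f j)) :
    G.CliqueFree m := by
  by_contra hG
  let φ := SimpleGraph.topEmbeddingOfNotCliqueFree hG
  have hT := hD.isTournament_comp (f := φ) fun i j hij ↦ φ.map_adj_iff.2 hij
  obtain ⟨p, hp, f, hf, hpf⟩ := hF _ hT
  exact hDF ⟨p, hp, φ ∘ f, φ.injective.comp hf, hpf⟩

end IsOrientation

def ltOrientation {V : Type*} [LinearOrder V] (G : SimpleGraph V) (u v : V) : Prop :=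
  G.Adj u v ∧ u < v

section LinearOrder

variable {V : Type*} [LinearOrder V] {G : SimpleGraph V}

theorem isOrientation_ltOrientation (G : SimpleGraph V) : IsOrientation G (ltOrientation G) := by
  refine ⟨fun u v ↦ ⟨fun h ↦ ?_, ?_⟩, fun u v ⟨⟨_, huv⟩, ⟨_, hvu⟩⟩ ↦ huv.not_gt hvu⟩
  · rcases (G.ne_of_adj h).lt_or_gt with huv | hvu
    exacts [Or.inl ⟨h, huv⟩, Or.inr ⟨h.symm, hvu⟩]
  · rintro (⟨h, -⟩ | ⟨h, -⟩)
    exacts [h, h.symm]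

theorem fFree_ltOrientation {n : ℕ} {F : Set (Σ m : ℕ, Fin m → Fin m → Prop)}
    (hF : ∀ p ∈ F, IsTournament p.2) (hsmall : ∀ p ∈ F, p.1 ≤ n → ¬ Transitive p.2)
    (hG : G.CliqueFree (n + 1)) : FFree F (ltOrientation G) := by
  rintro ⟨p, hp, f, hf, hpf⟩
  have hclique : ¬ G.CliqueFree p.1 := SimpleGraph.IsContained.not_cliqueFree
    ⟨⟨⟨f, (isOrientation_ltOrientation G).adj_of_isTournament (hF p hp) hpf⟩, hf⟩⟩
  have hp_le : p.1 ≤ n := by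
    by_contra! hlt
    exact hclique (hG.mono hlt)
  exact hsmall p hp hp_le <| (hF p hp).transitive_of_lt f fun i j hij ↦ ((hpf i j).1 hij).2

end LinearOrder

theorem cliqueFree_iff_not_exists_finset {V : Type*} (G : SimpleGraph V) (n : ℕ) :
    G.CliqueFree n ↔ ¬ ∃ S : Finset V, S.card = n ∧ ∀ u ∈ S, ∀ v ∈ S, u ≠ v → G.Adj u v := by
  simp only [SimpleGraph.CliqueFree, SimpleGraph.isNClique_iff, SimpleGraph.isClique_iff,
    Set.Pairwise, Finset.mem_coe, not_exists, not_and, and_comm]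

theorem ffree_orientation_iff_no_clique_general {V : Type*} (n : ℕ)
    (F : Set (Σ m : ℕ, Fin m → Fin m → Prop))
    (hF : ∀ p ∈ F, IsTournament p.2)
    (hsmall : ∀ p ∈ F, p.1 ≤ n → ¬ Transitive p.2)
    (hbig : ∀ m : ℕ, n < m → ∀ T : Fin m → Fin m → Prop, IsTournament T →
      ∃ p ∈ F, ∃ f : Fin p.1 → Fin m, Function.Injective f ∧ ∀ i j, p.2 i j ↔ T (f i) (f j))
    (G : SimpleGraph V) :
    (∃ D : V → V → Prop, IsOrientation G D ∧ FFree F D) ↔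
      ¬ ∃ S : Finset V, S.card = n + 1 ∧ ∀ u ∈ S, ∀ v ∈ S, u ≠ v → G.Adj u v := by
  rw [← cliqueFree_iff_not_exists_finset]
  refine ⟨fun ⟨D, hD, hDF⟩ ↦ hD.cliqueFree_of_fFree hDF (hbig (n + 1) n.lt_succ_self), fun hG ↦ ?_⟩
  let : LinearOrder V := WellOrderingRel.isWellOrder.linearOrder
  exact ⟨_, isOrientation_ltOrientation G, fFree_ltOrientation hF hsmall hG⟩

theorem ffree_orientation_iff_no_clique {V : Type*} [Fintype V] (n : ℕ) (hn : 1 ≤ n)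
    (F : Set (Σ m : ℕ, Fin m → Fin m → Prop))
    (hF : ∀ p ∈ F, IsTournament p.2)
    (hsmall : ∀ p ∈ F, p.1 ≤ n → ¬ Transitive p.2)
    (hbig : ∀ m : ℕ, n < m → ∀ T : Fin m → Fin m → Prop, IsTournament T →
      ∃ p ∈ F, ∃ f : Fin p.1 → Fin m, Function.Injective f ∧ ∀ i j, p.2 i j ↔ T (f i) (f j))
    (G : SimpleGraph V) :
    (∃ D : V → V → Prop, IsOrientation G D ∧ FFree F D) ↔
      ¬ ∃ S : Finset V, S.card = n + 1 ∧ ∀ u ∈ S, ∀ v ∈ S, u ≠ v → G.Adj u v :=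
  ffree_orientation_iff_no_clique_general n F hF hsmall hbig G
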